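/- arXiv:1001.1643 — 4 statements merged into one kernel-verified Lean document; each statement's English description precedes it below -/
import Mathlib

section
/- Let A = ⊕_{i≥0} A_i be a positively graded finite dimensional k-algebra, and let e, f be homogeneous (degree 0) idempotents such that there exists an invertible element a ∈ A with a e a^{-1} = f. If a_0 denotes the degree-0 component of a, then a_0 e a_0^{-1} = f, and in particular a_0 is invertible in A_0 after appropriate restriction; consequently right multiplication by a_0 gives an isomorphism of graded left A-modules Af → Ae. -/
/-- If `e, f` are degree-0 idempotents of a positively graded
finite dimensional algebra conjugate by an invertible element `a`, then the
degree-0 component `a₀` of `a` is invertible, conjugates `e` to `f`, and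
right multiplication by `a₀` is an isomorphism of graded modules `Af → Ae`. -/
theorem stmt1 (k : Type*) [Field k] (A : Type*) [Ring A] [Algebra k A]
    [FiniteDimensional k A]
    (𝒜 : ℕ → Submodule k A) [GradedRing 𝒜]
    (e f : A) (he0 : e ∈ 𝒜 0) (hf0 : f ∈ 𝒜 0)
    (he : e * e = e) (hf : f * f = f)
    (a : A) (ha : IsUnit a) (hconj : a * e = f * a) :
    IsUnit (DirectSum.decompose 𝒜 a 0 : A) ∧
    (DirectSum.decompose 𝒜 a 0 : A) * e = f * (DirectSum.decompose 𝒜 a 0 : A) ∧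
    (∀ i : ℕ, ∀ x ∈ 𝒜 i, x * (DirectSum.decompose 𝒜 a 0 : A) ∈ 𝒜 i) ∧
    Set.BijOn (fun x => x * (DirectSum.decompose 𝒜 a 0 : A))
      {x : A | x = x * f} {x : A | x = x * e} := by
  set π := GradedRing.projZeroRingHom 𝒜 with hπ
  have hπa : (DirectSum.decompose 𝒜 a 0 : A) = π a := rfl
  have hunit : IsUnit (π a) := ha.map π
  have hπe : π e = e := DirectSum.decompose_of_mem_same 𝒜 he0
  have hπf : π f = f := DirectSum.decompose_of_mem_same 𝒜 hf0
  have hc : π a * e = f * π a := by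
    have := congrArg π hconj
    rwa [map_mul, map_mul, hπe, hπf] at this
  refine ⟨hπa ▸ hunit, hπa ▸ hc, ?_, ?_⟩
  · intro i x hx
    have : x * (DirectSum.decompose 𝒜 a 0 : A) ∈ 𝒜 (i + 0) :=
      SetLike.mul_mem_graded hx (SetLike.coe_mem _)
    simpa using this
  · rw [hπa]
    obtain ⟨u, hu⟩ := hunit
    have hinv : e * ↑u⁻¹ = ↑u⁻¹ * f := by
      have h1 : (u : A) * e = f * u := by rw [hu]; exact hc
      have := congrArg (fun x => (↑u⁻¹ : A) * x * ↑u⁻¹) h1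
      simpa [mul_assoc, u.mul_inv, u.inv_mul] using this
    constructor
    · intro x hx
      simp only [Set.mem_setOf_eq] at hx ⊢
      rw [← hu]
      calc x * ↑u = x * f * ↑u := by rw [← hx]
        _ = x * (↑u * e) := by
              have h1 : (u : A) * e = f * u := by rw [hu]; exact hc
              rw [mul_assoc, ← h1]
        _ = x * ↑u * e := by rw [mul_assoc]
    constructor
    · intro x _ y _ hxy
      simp only at hxy
      rw [← hu] at hxy
      have := congrArg (· * (↑u⁻¹ : A)) hxy
      simpa [mul_assoc, u.mul_inv] using this
    · intro y hy
      simp only [Set.mem_setOf_eq] at hy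
      refine ⟨y * ↑u⁻¹, ?_, ?_⟩
      · simp only [Set.mem_setOf_eq]
        calc y * ↑u⁻¹ = y * e * ↑u⁻¹ := by rw [← hy]
          _ = y * (↑u⁻¹ * f) := by rw [mul_assoc, hinv]
          _ = y * ↑u⁻¹ * f := by rw [mul_assoc]
      · simp only [← hu]
        rw [mul_assoc, u.inv_mul, mul_one]
end

section
/- Let A be a nonzero finite dimensional k-algebra with a tight grading A = ⊕_{i≥0} A_i. Then A_0 is a maximal semisimple subalgebra of A, that is, A = A_0 ⊕ rad A as vector spaces. -/
/-- A tight grading on a finite dimensional algebra. -/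
def IsTightGrading (k : Type*) [Field k] (A : Type*) [Ring A] [Algebra k A]
    (𝒜 : ℕ → Submodule k A) : Prop :=
  (∀ i j : ℕ, ∀ x ∈ 𝒜 i, ∀ y ∈ 𝒜 j, x * y ∈ 𝒜 (i + j)) ∧
  (1 : A) ∈ 𝒜 0 ∧
  DirectSum.IsInternal 𝒜 ∧
  (∃ S : Subalgebra k A, Subalgebra.toSubmodule S = 𝒜 0 ∧ IsSemisimpleRing S) ∧
  Algebra.adjoin k ((𝒜 0 : Set A) ∪ (𝒜 1 : Set A)) = ⊤


/-- The Jacobson radical of a semisimple ring is trivial. -/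
lemma jacobson_bot_of_ss (R : Type*) [Ring R] [IsSemisimpleRing R] :
    ((⊥ : Ideal R).jacobson) = ⊥ := by
  obtain ⟨C, hC⟩ := exists_isCompl ((⊥ : Ideal R).jacobson : Submodule R R)
  by_cases hCtop : C = ⊤
  · have hd := hC.disjoint
    rw [hCtop, disjoint_top] at hd
    exact hd
  · obtain ⟨M, hM, hCM⟩ := Ideal.exists_le_maximal (C : Ideal R) hCtop
    have hJM : ((⊥ : Ideal R).jacobson) ≤ M := sInf_le ⟨bot_le, hM⟩
    have htop : (⊤ : Ideal R) ≤ M := by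
      rw [← hC.sup_eq_top]
      exact sup_le hJM hCM
    exact absurd (top_le_iff.mp htop) hM.ne_top

/-- If all left multiples of `x` are nilpotent, then `x` lies in the Jacobson radical. -/
lemma mem_jacobson_bot_of_nilpotent {R : Type*} [Ring R] {x : R}
    (hx : ∀ r : R, IsNilpotent (r * x)) : x ∈ ((⊥ : Ideal R).jacobson) := by
  rw [Ideal.jacobson]
  refine Submodule.mem_sInf.mpr fun M hM => ?_
  by_contra hxM
  have hlt : M < M ⊔ Submodule.span R {x} := by
    refine lt_of_le_of_ne le_sup_left fun hEq => hxM ?_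
    have hxmem : x ∈ M ⊔ Submodule.span R {x} :=
      Submodule.mem_sup_right (Submodule.mem_span_singleton_self x)
    rwa [← hEq] at hxmem
  have htop : M ⊔ Submodule.span R {x} = ⊤ := hM.2.1.2 _ hlt
  have h1 : (1 : R) ∈ M ⊔ Submodule.span R {x} := htop ▸ Submodule.mem_top
  obtain ⟨y, hy, z, hz, hyz⟩ := Submodule.mem_sup.mp h1
  obtain ⟨r, rfl⟩ := Submodule.mem_span_singleton.mp hz
  have hyeq : y = 1 - r * x := by
    rw [← hyz]; simp [smul_eq_mul]
  have hu : IsUnit y := hyeq ▸ (hx r).isUnit_one_sub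
  exact hM.2.1.1 (Ideal.eq_top_of_isUnit_mem M hy hu)

/-- For a tight grading on a nonzero finite dimensional algebra
over an algebraically closed field, the degree-0 part is a maximal semisimple
subalgebra: `A = A₀ ⊕ rad A` as vector spaces. -/
theorem stmt5 (k : Type*) [Field k] [IsAlgClosed k]
    (A : Type*) [Ring A] [Algebra k A] [FiniteDimensional k A] [Nontrivial A]
    (𝒜 : ℕ → Submodule k A) (h : IsTightGrading k A 𝒜) :
    IsCompl (𝒜 0) (Submodule.restrictScalars k ((⊥ : Ideal A).jacobson)) := by
  obtain ⟨hmul, hone, hint, ⟨S, hS, hSS⟩, -⟩ := h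
  haveI : SetLike.GradedOne 𝒜 := ⟨hone⟩
  haveI : SetLike.GradedMul 𝒜 := ⟨fun {i j gi gj} hi hj => hmul i j gi hi gj hj⟩
  haveI : SetLike.GradedMonoid 𝒜 := {}
  haveI : GradedRing 𝒜 := { (hint.chooseDecomposition : DirectSum.Decomposition 𝒜) with }
  have hsup : (⨆ i, 𝒜 i) = ⊤ := hint.submodule_iSup_eq_top
  have hind := hint.submodule_iSupIndep
  have hSmem : ∀ x : A, x ∈ S ↔ x ∈ 𝒜 0 := fun x => by
    rw [← hS]; rfl
  -- the degree-zero projection, as a ring hom into S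
  set π : A →+* A := GradedRing.projZeroRingHom 𝒜 with hπ
  have hπmem : ∀ x : A, π x ∈ S := fun x => (hSmem _).mpr (by
    rw [hπ, GradedRing.projZeroRingHom_apply]; exact SetLike.coe_mem _)
  set πS : A →+* S := π.codRestrict S.toSubring hπmem with hπS
  have hπS_eq : ∀ x : A, x ∈ 𝒜 0 → π x = x := fun x hx => by
    rw [hπ, GradedRing.projZeroRingHom_apply]
    exact DirectSum.decompose_of_mem_same 𝒜 hx
  have hsurj : Function.Surjective πS := by
    intro s
    refine ⟨s.1, Subtype.ext ?_⟩
    show π s.1 = s.1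
    exact hπS_eq s.1 ((hSmem s.1).mp s.2)
  -- elements of the Jacobson radical have zero degree-0 component
  have hjac0 : ∀ x ∈ (⊥ : Ideal A).jacobson, π x = 0 := by
    intro x hx
    have h2 := Ideal.map_jacobson_of_surjective hsurj (le_refl (RingHom.ker πS))
    have h3 : Ideal.map πS (RingHom.ker πS) = ⊥ := by
      rw [eq_bot_iff, Ideal.map_le_iff_le_comap]
      intro y hy
      exact hy
    have h4 : Ideal.map πS ((RingHom.ker πS).jacobson) = ⊥ := by
      rw [h2, h3, jacobson_bot_of_ss S]
    have h5 : x ∈ (RingHom.ker πS).jacobson := Ideal.jacobson_mono bot_le hx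
    have h6 : πS x ∈ Ideal.map πS ((RingHom.ker πS).jacobson) := Ideal.mem_map_of_mem _ h5
    rw [h4, Ideal.mem_bot] at h6
    have : (πS x : A) = 0 := by rw [h6]; rfl
    exact this
  -- the positive-degree part
  set N : Submodule k A := ⨆ i, 𝒜 (i + 1) with hN
  -- N is a left ideal
  have hNmul : ∀ r x : A, x ∈ N → r * x ∈ N := by
    have step : ∀ (i : ℕ) (r : A), r ∈ 𝒜 i → ∀ x, x ∈ N → r * x ∈ N := by
      intro i r hr x hx
      refine Submodule.iSup_induction (motive := fun y => r * y ∈ N) _ hx ?_ ?_ ?_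
      · intro j y hy
        have hm := hmul i (j + 1) r hr y hy
        have he : i + (j + 1) = (i + j) + 1 := by omega
        rw [he] at hm
        exact Submodule.mem_iSup_of_mem (i + j) hm
      · simp
      · intro a b ha hb
        rw [mul_add]
        exact add_mem ha hb
    intro r x hx
    have hr : r ∈ ⨆ i, 𝒜 i := hsup ▸ Submodule.mem_top
    refine Submodule.iSup_induction (motive := fun s => s * x ∈ N) _ hr ?_ ?_ ?_
    · intro i s hs
      exact step i s hs x hx
    · simp
    · intro a b ha hb
      rw [add_mul]
      exact add_mem ha hb
  -- products of the tails
  set T : ℕ → Submodule k A := fun m => ⨆ i, 𝒜 (i + m) with hT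
  have hTmul : ∀ a b : ℕ, T a * T b ≤ T (a + b) := by
    intro a b
    rw [hT]
    simp only [Submodule.iSup_mul, Submodule.mul_iSup]
    refine iSup_le fun i => iSup_le fun j => Submodule.mul_le.mpr fun x hx y hy => ?_
    have hm := hmul _ _ x hx y hy
    have he : (j + a) + (i + b) = (i + j) + (a + b) := by omega
    rw [he] at hm
    exact Submodule.mem_iSup_of_mem (i + j) hm
  have hNT : N = T 1 := rfl
  have hTpow : ∀ m : ℕ, N ^ (m + 1) ≤ T (m + 1) := by
    intro m
    induction m with
    | zero => rw [pow_one, hNT]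
    | succ n ih =>
        calc N ^ (n + 2) = N ^ (n + 1) * N := by rw [pow_succ]
        _ ≤ T (n + 1) * T 1 := mul_le_mul' ih (le_of_eq hNT)
        _ ≤ T (n + 2) := hTmul (n + 1) 1
  -- only finitely many graded pieces are nonzero
  have hfin : Set.Finite {i | 𝒜 i ≠ ⊥} := Submodule.finite_ne_bot_of_iSupIndep hind
  set m : ℕ := hfin.toFinset.sup id + 1 with hm
  have hTm : T m = ⊥ := by
    rw [hT, eq_bot_iff]
    refine iSup_le fun i => ?_
    rcases eq_or_ne (𝒜 (i + m)) ⊥ with he | hne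
    · rw [he]
    · have hmem : i + m ∈ hfin.toFinset := hfin.mem_toFinset.mpr hne
      have hle : i + m ≤ hfin.toFinset.sup id := Finset.le_sup (f := id) hmem
      omega
  -- every element of N is nilpotent
  have hnil : ∀ x ∈ N, IsNilpotent x := by
    intro x hx
    refine ⟨m, ?_⟩
    have hxm : x ^ m ∈ N ^ m := Submodule.pow_mem_pow N hx m
    have : N ^ m ≤ T m := by
      have : m = (hfin.toFinset.sup id) + 1 := hm
      rw [this] at *
      exact hTpow _
    have hb : x ^ m ∈ (⊥ : Submodule k A) := hTm ▸ this hxm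
    simpa using hb
  -- N is contained in the Jacobson radical
  have hNJ : N ≤ Submodule.restrictScalars k ((⊥ : Ideal A).jacobson) := by
    intro x hx
    show x ∈ (⊥ : Ideal A).jacobson
    exact mem_jacobson_bot_of_nilpotent fun r => hnil (r * x) (hNmul r x hx)
  constructor
  · -- disjointness
    rw [disjoint_iff_inf_le]
    intro x ⟨hx0, hxJ⟩
    have hx : π x = 0 := hjac0 x hxJ
    rw [hπS_eq x hx0] at hx
    simpa using hx
  · -- codisjointness
    rw [codisjoint_iff, eq_top_iff, ← hsup]
    refine iSup_le fun i => ?_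
    cases i with
    | zero => exact le_trans le_sup_left le_rfl
    | succ n =>
        exact le_trans (le_trans (le_iSup (fun i => 𝒜 (i + 1)) n) hNJ) le_sup_right
end

section
/- Let k be a field and r ≥ 1. Define H_r as the set k^* × k^{r-1} with multiplication β * α = ( Σ_{i=1}^{l} α_i Σ_{k_1+...+k_i = l, k_j > 0} β_{k_1} β_{k_2} ... β_{k_i} )_{l=1}^{r}. Then H_r ≅ Aut_{k-alg}(k[x]/(x^{r+1})), where (α_1,...,α_r) corresponds to the algebra automorphism sending x to Σ_{i=1}^r α_i x^i. -/
open Polynomial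

/-- The substitution polynomial `x ↦ Σ_{i=1}^r α_i x^i` attached to a tuple
`α = (α_1, …, α_r)` (indexed here by `Fin r`, with `α i` playing the role of
`α_{i+1}`). -/
noncomputable def subst {k : Type*} [Field k] {r : ℕ} (α : Fin r → k) : Polynomial k :=
  ∑ i : Fin r, Polynomial.C (α i) * Polynomial.X ^ ((i : ℕ) + 1)

/-- The truncated polynomial algebra `k[x]/(x^{r+1})`. -/
abbrev TruncPoly (k : Type*) [Field k] (r : ℕ) :=
  Polynomial k ⧸ Ideal.span {(Polynomial.X : Polynomial k) ^ (r + 1)}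

section Aux
variable {k : Type*} [Field k] {r : ℕ}

lemma subst_coeff_zero (α : Fin r → k) : (subst α).coeff 0 = 0 := by
  simp [subst, coeff_X_pow]

lemma subst_coeff_succ (α : Fin r → k) {m : ℕ} (hm : m < r) :
    (subst α).coeff (m + 1) = α ⟨m, hm⟩ := by
  rw [subst, finset_sum_coeff]
  rw [Finset.sum_eq_single (⟨m, hm⟩ : Fin r)]
  · simp
  · intro b _ hb
    simp only [coeff_C_mul, coeff_X_pow]
    rw [if_neg, mul_zero]
    intro h
    apply hb
    apply Fin.ext
    simp only [Fin.val_mk]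
    omega
  · simp

lemma subst_coeff_of_lt (α : Fin r → k) {m : ℕ} (hm : r < m) :
    (subst α).coeff m = 0 := by
  rw [subst, finset_sum_coeff]
  apply Finset.sum_eq_zero
  intro i _
  simp only [coeff_C_mul, coeff_X_pow]
  rw [if_neg (by omega), mul_zero]

lemma subst_X_dvd (α : Fin r → k) : X ∣ subst α :=
  X_dvd_iff.mpr (subst_coeff_zero α)

lemma subst_degree_lt (α : Fin r → k) : (subst α).degree < (r + 1 : ℕ) := by
  apply degree_lt_iff_coeff_zero _ _ |>.mpr
  intro m hm
  exact subst_coeff_of_lt α (by omega)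

lemma key_dvd {s : Polynomial k} (h0 : s.coeff 0 = 0) (h1 : s.coeff 1 ≠ 0) :
    ∀ (n : ℕ) (p : Polynomial k), X ^ n ∣ p.comp s → X ^ n ∣ p := by
  intro n
  induction n with
  | zero => intro p _; simpa using one_dvd _
  | succ n ih =>
    intro p h
    have hX : (X : Polynomial k) ∣ p.comp s :=
      dvd_trans (dvd_pow_self X (Nat.succ_ne_zero n)) h
    have hp0 : p.coeff 0 = 0 := by
      have := X_dvd_iff.mp hX
      rwa [coeff_zero_eq_eval_zero, eval_comp, ← coeff_zero_eq_eval_zero s, h0,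
        ← coeff_zero_eq_eval_zero] at this
    obtain ⟨q, rfl⟩ : (X : Polynomial k) ∣ p := X_dvd_iff.mpr hp0
    have hs : s = X * s.divX := by
      conv_lhs => rw [← X_mul_divX_add s, h0, map_zero, add_zero]
    have hcomp : (X * q).comp s = X * (s.divX * q.comp s) := by
      rw [mul_comp, X_comp]
      nth_rewrite 1 [hs]
      ring
    rw [hcomp, pow_succ'] at h
    have h' : X ^ n ∣ s.divX * q.comp s :=
      (mul_dvd_mul_iff_left (X_ne_zero (R := k))).mp h
    have hnd : ¬ (X : Polynomial k) ∣ s.divX := by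
      rw [X_dvd_iff, coeff_divX]
      exact h1
    have := Prime.pow_dvd_of_dvd_mul_left prime_X n hnd h'
    rw [pow_succ']
    exact mul_dvd_mul_left X (ih q this)

lemma mk_comp (s p : Polynomial k) :
    AdjoinRoot.mk ((X : Polynomial k) ^ (r + 1)) (p.comp s)
      = aeval (AdjoinRoot.mk ((X : Polynomial k) ^ (r + 1)) s) p := by
  rw [← AdjoinRoot.aeval_eq, aeval_comp, AdjoinRoot.aeval_eq]

lemma phi_aux (α : Fin r → k) :
    aeval (AdjoinRoot.mk ((X : Polynomial k) ^ (r + 1)) (subst α))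
      ((X : Polynomial k) ^ (r + 1)) = 0 := by
  rw [aeval_X_pow,
    ← map_pow (AdjoinRoot.mk ((X : Polynomial k) ^ (r + 1))) (subst α) (r + 1),
    AdjoinRoot.mk_eq_zero]
  exact pow_dvd_pow_of_dvd (subst_X_dvd α) _

noncomputable def phi (α : Fin r → k) : TruncPoly k r →ₐ[k] TruncPoly k r :=
  AdjoinRoot.liftAlgHom ((X : Polynomial k) ^ (r + 1)) (Algebra.ofId k _)
    (AdjoinRoot.mk ((X : Polynomial k) ^ (r + 1)) (subst α)) (phi_aux α)

lemma phi_mk (α : Fin r → k) (p : Polynomial k) :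
    phi α (AdjoinRoot.mk ((X : Polynomial k) ^ (r + 1)) p) = AdjoinRoot.mk ((X : Polynomial k) ^ (r + 1)) (p.comp (subst α)) := by
  rw [mk_comp]
  exact AdjoinRoot.liftAlgHom_mk ((X : Polynomial k) ^ (r + 1)) _ _ (phi_aux α) p

lemma phi_bijective (α : Fin r → k) (hα1 : (subst α).coeff 1 ≠ 0) :
    Function.Bijective (phi α) := by
  have hinj : Function.Injective (phi α) := by
    rw [injective_iff_map_eq_zero]
    intro a ha
    obtain ⟨p, rfl⟩ := AdjoinRoot.mk_surjective (g := (X : Polynomial k) ^ (r + 1)) a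
    rw [phi_mk] at ha
    replace ha := AdjoinRoot.mk_eq_zero.mp ha
    exact AdjoinRoot.mk_eq_zero.mpr (key_dvd (subst_coeff_zero α) hα1 (r + 1) p ha)
  haveI : Module.Finite k (TruncPoly k r) :=
    Module.Finite.of_basis
      (AdjoinRoot.powerBasis (f := (X : Polynomial k) ^ (r + 1))
        (pow_ne_zero _ X_ne_zero)).basis
  exact ⟨hinj, (LinearMap.injective_iff_surjective (f := (phi α).toLinearMap)).mp hinj⟩

lemma coeff_one_comp {p q : Polynomial k} (hp : p.coeff 0 = 0) :
    (q.comp p).coeff 1 = q.coeff 1 * p.coeff 1 := by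
  rw [comp_eq_sum_left, Polynomial.sum_def, finset_sum_coeff]
  rw [Finset.sum_eq_single 1]
  · simp
  · intro j _ hj1
    match j, hj1 with
    | 0, _ => simp
    | (m+2), _ =>
      have hdvd : (X : Polynomial k) ^ (m + 2) ∣ p ^ (m + 2) :=
        pow_dvd_pow_of_dvd (X_dvd_iff.mpr hp) _
      have : (p ^ (m + 2)).coeff 1 = 0 := X_pow_dvd_iff.mp hdvd 1 (by omega)
      simp [this]
  · intro h1
    rw [Polynomial.notMem_support_iff.mp h1]
    simp

lemma comp_coeff (α β : Fin r → k) (n : ℕ) :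
    ((subst α).comp (subst β)).coeff n
      = ∑ i : Fin r, α i * ((subst β ^ ((i : ℕ) + 1)).coeff n) := by
  have hcomp : (subst α).comp (subst β)
      = ∑ i : Fin r, C (α i) * (subst β) ^ ((i : ℕ) + 1) := by
    rw [subst]
    simp only [comp, eval₂_finset_sum, eval₂_mul, eval₂_C, eval₂_X_pow]
  rw [hcomp, finset_sum_coeff]
  simp [coeff_C_mul]

end Aux

/-- `H_r ≅ Aut_{k-alg}(k[x]/(x^{r+1}))`: the tuples
`(α_1,…,α_r)` with `α_1 ≠ 0` correspond bijectively to the algebra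
automorphisms of `k[x]/(x^{r+1})` via `x ↦ Σ α_i x^i`, the group law of `H_r`
corresponds to composition of substitutions, and the composition of
substitutions is given by the convolution formula of `H_r`
(the coefficient of `x^l` in `A(B(x))` is
`Σ_i α_i · Σ_{k_1+⋯+k_i=l, k_j>0} β_{k_1}⋯β_{k_i} = Σ_i α_i · [x^l](B(x)^i)`). -/
theorem stmt6 (k : Type*) [Field k] (r : ℕ) (hr : 1 ≤ r) :
    ∃ Φ : {α : Fin r → k // α ⟨0, hr⟩ ≠ 0} ≃ (TruncPoly k r ≃ₐ[k] TruncPoly k r),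
      (∀ α, (Φ α) (Ideal.Quotient.mk _ Polynomial.X)
          = Ideal.Quotient.mk _ (subst α.1)) ∧
      (∀ α β, (Φ β * Φ α) (Ideal.Quotient.mk _ Polynomial.X)
          = Ideal.Quotient.mk _ ((subst α.1).comp (subst β.1))) ∧
      (∀ (α β : {α : Fin r → k // α ⟨0, hr⟩ ≠ 0}) (l : ℕ), l < r →
        ((subst α.1).comp (subst β.1)).coeff (l + 1)
          = ∑ i : Fin r, α.1 i * ((subst β.1 ^ ((i : ℕ) + 1)).coeff (l + 1))) := by
  have h1ne : ∀ α : {α : Fin r → k // α ⟨0, hr⟩ ≠ 0}, (subst α.1).coeff 1 ≠ 0 := by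
    intro α
    have h := subst_coeff_succ α.1 hr
    rw [zero_add] at h
    rw [h]
    exact α.2
  set F : {α : Fin r → k // α ⟨0, hr⟩ ≠ 0} → (TruncPoly k r ≃ₐ[k] TruncPoly k r) :=
    fun α => AlgEquiv.ofBijective (phi α.1) (phi_bijective α.1 (h1ne α)) with hF
  have hFapp : ∀ (α : {α : Fin r → k // α ⟨0, hr⟩ ≠ 0}) (p : Polynomial k),
      F α (AdjoinRoot.mk ((X : Polynomial k) ^ (r + 1)) p)
        = AdjoinRoot.mk ((X : Polynomial k) ^ (r + 1)) (p.comp (subst α.1)) := fun α p => phi_mk α.1 p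
  have hFX : ∀ α, F α (AdjoinRoot.mk ((X : Polynomial k) ^ (r + 1)) X)
      = AdjoinRoot.mk ((X : Polynomial k) ^ (r + 1)) (subst α.1) := by
    intro α; rw [hFapp, X_comp]
  have hFinj : Function.Injective F := by
    intro α β h
    have h2 : AdjoinRoot.mk ((X : Polynomial k) ^ (r + 1)) (subst α.1)
        = AdjoinRoot.mk ((X : Polynomial k) ^ (r + 1)) (subst β.1) := by
      rw [← hFX α, ← hFX β, h]
    have h3 : subst α.1 = subst β.1 := by
      have hd := AdjoinRoot.mk_eq_mk.mp h2
      have := eq_zero_of_dvd_of_degree_lt hd (by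
        rw [degree_X_pow]
        exact lt_of_le_of_lt (degree_sub_le _ _)
          (max_lt (subst_degree_lt _) (subst_degree_lt _)))
      exact sub_eq_zero.mp this
    apply Subtype.ext
    funext i
    have hA : (subst α.1).coeff ((i : ℕ) + 1) = α.1 i := by
      rw [subst_coeff_succ α.1 i.isLt, Fin.eta]
    have hB : (subst β.1).coeff ((i : ℕ) + 1) = β.1 i := by
      rw [subst_coeff_succ β.1 i.isLt, Fin.eta]
    rw [← hA, ← hB, h3]
  have hFsurj : Function.Surjective F := by
    intro σ
    obtain ⟨q, hq⟩ := AdjoinRoot.mk_surjective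
      (g := (X : Polynomial k) ^ (r + 1)) (σ (AdjoinRoot.root _))
    have hmonic : ((X : Polynomial k) ^ (r + 1)).Monic := monic_X_pow _
    set p := q %ₘ ((X : Polynomial k) ^ (r + 1)) with hpdef
    have hmkp : AdjoinRoot.mk ((X : Polynomial k) ^ (r + 1)) p
        = σ (AdjoinRoot.root _) := by
      rw [← hq, AdjoinRoot.mk_eq_mk]
      refine ⟨-(q /ₘ ((X : Polynomial k) ^ (r + 1))), ?_⟩
      have := modByMonic_add_div q ((X : Polynomial k) ^ (r + 1))
      rw [hpdef]
      linear_combination this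
    have hrootpow : (AdjoinRoot.root ((X : Polynomial k) ^ (r + 1))) ^ (r + 1) = 0 := by
      rw [← AdjoinRoot.mk_X, ← map_pow, AdjoinRoot.mk_eq_zero]
    have hp0 : p.coeff 0 = 0 := by
      have h5 : AdjoinRoot.mk ((X : Polynomial k) ^ (r + 1)) (p ^ (r + 1)) = 0 := by
        have e0 : AdjoinRoot.mk ((X : Polynomial k) ^ (r + 1)) (p ^ (r + 1))
            = (AdjoinRoot.mk ((X : Polynomial k) ^ (r + 1)) p) ^ (r + 1) := map_pow _ _ _
        rw [e0, hmkp]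
        calc σ (AdjoinRoot.root ((X : Polynomial k) ^ (r + 1))) ^ (r + 1)
            = σ ((AdjoinRoot.root ((X : Polynomial k) ^ (r + 1))) ^ (r + 1)) :=
              (map_pow σ _ _).symm
          _ = 0 := by rw [hrootpow]; exact map_zero σ
      have h6 := AdjoinRoot.mk_eq_zero.mp h5
      have h7 : (X : Polynomial k) ∣ p ^ (r + 1) :=
        dvd_trans (dvd_pow_self X (Nat.succ_ne_zero r)) h6
      exact X_dvd_iff.mp (prime_X.dvd_of_dvd_pow h7)
    have hp1 : p.coeff 1 ≠ 0 := by
      obtain ⟨b, hb⟩ := σ.surjective (AdjoinRoot.root ((X : Polynomial k) ^ (r + 1)))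
      obtain ⟨q', rfl⟩ := AdjoinRoot.mk_surjective b
      have hσq : σ (AdjoinRoot.mk ((X : Polynomial k) ^ (r + 1)) q')
          = AdjoinRoot.mk ((X : Polynomial k) ^ (r + 1)) (q'.comp p) := by
        have e1 := aeval_algHom_apply σ (AdjoinRoot.root ((X : Polynomial k) ^ (r + 1))) q'
        rw [AdjoinRoot.aeval_eq] at e1
        have e2 : (aeval ((AdjoinRoot.mk ((X : Polynomial k) ^ (r + 1))) p)) q'
            = AdjoinRoot.mk ((X : Polynomial k) ^ (r + 1)) (q'.comp p) := (mk_comp p q').symm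
        rw [hmkp] at e2
        exact e1.symm.trans e2
      have h8 : AdjoinRoot.mk ((X : Polynomial k) ^ (r + 1)) (q'.comp p)
          = AdjoinRoot.mk ((X : Polynomial k) ^ (r + 1)) X := by
        rw [← hσq, hb, AdjoinRoot.mk_X]
      have h9 := AdjoinRoot.mk_eq_mk.mp h8
      have h10 : (X : Polynomial k) ^ 2 ∣ q'.comp p - X :=
        dvd_trans (pow_dvd_pow X (by omega)) h9
      have h11 : (q'.comp p - X).coeff 1 = 0 := X_pow_dvd_iff.mp h10 1 one_lt_two
      have h12 : (q'.comp p).coeff 1 = 1 := by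
        have := h11
        rw [coeff_sub, coeff_X_one, sub_eq_zero] at this
        exact this
      rw [coeff_one_comp hp0] at h12
      intro hc
      rw [hc, mul_zero] at h12
      exact one_ne_zero h12.symm
    set α : Fin r → k := fun i => p.coeff ((i : ℕ) + 1) with hα
    have hα0 : α ⟨0, hr⟩ ≠ 0 := by simpa [hα] using hp1
    have hsub : subst α = p := by
      ext n
      match n with
      | 0 => rw [subst_coeff_zero, hp0]
      | (m + 1) =>
        by_cases hm : m < r
        · rw [subst_coeff_succ α hm]
        · rw [subst_coeff_of_lt α (by omega)]
          symm
          apply coeff_eq_zero_of_degree_lt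
          have hdeg : p.degree < ((r + 1 : ℕ) : WithBot ℕ) := by
            rw [← degree_X_pow (R := k) (n := r + 1)]
            exact degree_modByMonic_lt q hmonic
          exact lt_of_lt_of_le hdeg (by exact_mod_cast Nat.succ_le_succ (le_of_not_gt hm))
    refine ⟨⟨α, hα0⟩, ?_⟩
    have hAlg : (F ⟨α, hα0⟩).toAlgHom = (σ : TruncPoly k r →ₐ[k] TruncPoly k r) := by
      apply AdjoinRoot.algHom_ext
      show F ⟨α, hα0⟩ (AdjoinRoot.root _) = σ (AdjoinRoot.root _)
      rw [← AdjoinRoot.mk_X, hFX]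
      show AdjoinRoot.mk ((X : Polynomial k) ^ (r + 1)) (subst α) = σ (AdjoinRoot.mk ((X : Polynomial k) ^ (r + 1)) X)
      rw [hsub, AdjoinRoot.mk_X]
      exact hmkp
    refine AlgEquiv.ext fun x => ?_
    exact DFunLike.congr_fun hAlg x
  refine ⟨Equiv.ofBijective F ⟨hFinj, hFsurj⟩, ?_, ?_, ?_⟩
  · intro α
    exact hFX α
  · intro α β
    rw [AlgEquiv.mul_apply]
    show F β (F α (Ideal.Quotient.mk _ X)) = _
    have h1 : F α (Ideal.Quotient.mk (Ideal.span {(X : Polynomial k) ^ (r + 1)}) X)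
        = AdjoinRoot.mk ((X : Polynomial k) ^ (r + 1)) (subst α.1) := hFX α
    rw [h1, hFapp β]
    rfl
  · intro α β l _
    exact comp_coeff α.1 β.1 (l + 1)
end

section
/- Let k be an algebraically closed field of characteristic 2 and r ≥ 1. In the algebra D(2B)^{r,1} (relations βη = ηγ = γβ = 0, αβγ = βγα, α^2 = αβγ, γαβ = η^r), any k-algebra automorphism φ fixing the two vertex idempotents and written as φ(α) = a_1 α + a_2 βγ + a_3 αβγ, φ(β) = b_1 β + b_2 αβ, φ(γ) = c_1 γ + c_2 γα, φ(η) = Σ_{i=1}^r d_i η^i satisfies: b_1 c_2 = b_2 c_1, d_1^r = a_1 b_1 c_1, a_1 = b_1 c_1, and d_1, a_1, b_1, c_1 are all nonzero. -/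
/-- Generators of the quiver of `D(2B)^{r,c}`: two vertices `0, 1`, loops
`α : 0→0` and `η : 1→1`, and arrows `β : 0→1`, `γ : 1→0`. -/
inductive D2BGen | e0 | e1 | a | b | g | h

open FreeAlgebra

variable (k : Type*) [Field k]

/-- The defining relations of `D(2B)^{r,c}`: vertex relations, source/target
relations, and `βη = ηγ = γβ = 0`, `αβγ = βγα`, `α² = c·αβγ`, `γαβ = η^r`. -/
inductive D2BRel (r c : ℕ) : FreeAlgebra k D2BGen → FreeAlgebra k D2BGen → Prop
  | idem0 : D2BRel r c (ι k D2BGen.e0 * ι k D2BGen.e0) (ι k D2BGen.e0)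
  | idem1 : D2BRel r c (ι k D2BGen.e1 * ι k D2BGen.e1) (ι k D2BGen.e1)
  | orth01 : D2BRel r c (ι k D2BGen.e0 * ι k D2BGen.e1) 0
  | orth10 : D2BRel r c (ι k D2BGen.e1 * ι k D2BGen.e0) 0
  | sum1 : D2BRel r c (ι k D2BGen.e0 + ι k D2BGen.e1) 1
  | src_a : D2BRel r c (ι k D2BGen.e0 * ι k D2BGen.a * ι k D2BGen.e0) (ι k D2BGen.a)
  | src_b : D2BRel r c (ι k D2BGen.e0 * ι k D2BGen.b * ι k D2BGen.e1) (ι k D2BGen.b)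
  | src_g : D2BRel r c (ι k D2BGen.e1 * ι k D2BGen.g * ι k D2BGen.e0) (ι k D2BGen.g)
  | src_h : D2BRel r c (ι k D2BGen.e1 * ι k D2BGen.h * ι k D2BGen.e1) (ι k D2BGen.h)
  | rel_bh : D2BRel r c (ι k D2BGen.b * ι k D2BGen.h) 0
  | rel_hg : D2BRel r c (ι k D2BGen.h * ι k D2BGen.g) 0
  | rel_gb : D2BRel r c (ι k D2BGen.g * ι k D2BGen.b) 0
  | rel_comm : D2BRel r c (ι k D2BGen.a * ι k D2BGen.b * ι k D2BGen.g)
      (ι k D2BGen.b * ι k D2BGen.g * ι k D2BGen.a)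
  | rel_a2 : D2BRel r c (ι k D2BGen.a * ι k D2BGen.a)
      ((c : FreeAlgebra k D2BGen) * (ι k D2BGen.a * ι k D2BGen.b * ι k D2BGen.g))
  | rel_eta : D2BRel r c (ι k D2BGen.g * ι k D2BGen.a * ι k D2BGen.b)
      ((ι k D2BGen.h) ^ r)

/-- The algebra `D(2B)^{r,c}` presented by the quiver and relations above. -/
abbrev D2B (r c : ℕ) := RingQuot (D2BRel k r c)




noncomputable section Stmt19Aux

variable (r : ℕ)

variable {k}

/-- The shift operator on `Fin (r+1) → k`: `(shift f) j = f (j-1)`, `(shift f) 0 = 0`. -/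
def shiftL : (Fin (r+1) → k) →ₗ[k] (Fin (r+1) → k) where
  toFun f := fun j => if h : (j : ℕ) = 0 then 0 else f ⟨(j : ℕ) - 1, by omega⟩
  map_add' f g := by funext j; by_cases h : (j : ℕ) = 0 <;> simp [h, Fin.ext_iff, -Fin.val_eq_zero_iff]
  map_smul' c f := by funext j; by_cases h : (j : ℕ) = 0 <;> simp [h, Fin.ext_iff, -Fin.val_eq_zero_iff]

lemma shiftL_apply (f : Fin (r+1) → k) (j : Fin (r+1)) :
    shiftL r f j = if h : (j : ℕ) = 0 then 0 else f ⟨(j : ℕ) - 1, by omega⟩ := rfl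

lemma shiftL_pow (m : ℕ) : ∀ (f : Fin (r+1) → k) (j : Fin (r+1)),
    (shiftL (k := k) r ^ m) f j = if h : m ≤ (j : ℕ) then f ⟨(j : ℕ) - m, by omega⟩ else 0 := by
  induction m with
  | zero => intro f j; simp
  | succ n ih =>
      intro f j
      have h1 : shiftL (k := k) r ^ (n+1) = shiftL r ^ n * shiftL r := pow_succ _ _
      rw [h1, Module.End.mul_apply, ih]
      by_cases h : n ≤ (j : ℕ)
      · rw [dif_pos h, shiftL_apply]
        by_cases h2 : n + 1 ≤ (j : ℕ)
        · rw [dif_pos h2, dif_neg (show ¬ ((⟨(j:ℕ) - n, by omega⟩ : Fin (r+1)) : ℕ) = 0 by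
            show ¬ ((j:ℕ) - n = 0); omega)]
          congr 1
          all_goals (apply Fin.ext; omega)
        · rw [dif_pos (show ((⟨(j:ℕ) - n, by omega⟩ : Fin (r+1)) : ℕ) = 0 by
            show (j:ℕ) - n = 0; omega), dif_neg h2]
      · rw [dif_neg h, dif_neg (by omega)]

/-- delta function at index `r`. -/
def deltaR : Fin (r+1) → k := fun j => if (j : ℕ) = r then 1 else 0

lemma shiftL_pow_r (f : Fin (r+1) → k) :
    (shiftL (k := k) r ^ r) f = f ⟨0, by omega⟩ • deltaR r := by
  funext j
  rw [shiftL_pow]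
  by_cases h : r ≤ (j : ℕ)
  · have hj : (j : ℕ) = r := by omega
    rw [dif_pos h]
    have he : f ⟨(j:ℕ) - r, by omega⟩ = f ⟨0, by omega⟩ := by
      congr 1
      all_goals exact Fin.ext (by show (j:ℕ) - r = 0; omega)
    rw [he]
    simp [deltaR, hj]
  · rw [dif_neg h]
    simp only [deltaR, Pi.smul_apply, smul_eq_mul]
    rw [if_neg (by omega), mul_zero]

lemma shiftL_deltaR : shiftL (k := k) r (deltaR r) = 0 := by
  funext j
  rw [shiftL_apply]
  by_cases h : (j : ℕ) = 0
  · rw [dif_pos h]; rfl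
  · rw [dif_neg h]
    simp only [deltaR, Pi.zero_apply]
    rw [if_neg (by omega)]

variable (k) in
abbrev Vm := (Fin (r+1) → k) × k × k

variable (k) in
open LinearMap in
def LE1 : Module.End k (Vm k r) := LinearMap.prod (fst k _ _) 0
variable (k) in
open LinearMap in
def LE0 : Module.End k (Vm k r) := LinearMap.prod 0 (snd k _ _)
variable (k) in
open LinearMap in
def LH : Module.End k (Vm k r) := LinearMap.prod ((shiftL r).comp (fst k _ _)) 0
variable (k) in
open LinearMap in
def LB : Module.End k (Vm k r) :=
  LinearMap.prod 0 (LinearMap.prod ((proj (⟨0, by omega⟩ : Fin (r+1))).comp (fst k _ _)) 0)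
variable (k) in
open LinearMap in
def LA : Module.End k (Vm k r) :=
  LinearMap.prod 0 (LinearMap.prod 0 ((fst k k k).comp (snd k _ _)))
variable (k) in
open LinearMap in
def LG : Module.End k (Vm k r) :=
  LinearMap.prod ((toSpanSingleton k _ (deltaR r)).comp ((snd k k k).comp (snd k _ _))) 0

@[simp] lemma LE1_apply (v : Vm k r) : LE1 k r v = (v.1, 0, 0) := rfl
@[simp] lemma LE0_apply (v : Vm k r) : LE0 k r v = (0, v.2) := rfl
@[simp] lemma LH_apply (v : Vm k r) : LH k r v = (shiftL r v.1, 0, 0) := rfl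
@[simp] lemma LB_apply (v : Vm k r) : LB k r v = (0, v.1 ⟨0, by omega⟩, 0) := rfl
@[simp] lemma LA_apply (v : Vm k r) : LA k r v = (0, 0, v.2.1) := rfl
@[simp] lemma LG_apply (v : Vm k r) : LG k r v = (v.2.2 • deltaR r, 0, 0) := rfl

lemma LH_pow (m : ℕ) : ∀ (v : Vm k r),
    (LH k r ^ (m+1)) v = ((shiftL r ^ (m+1)) v.1, 0, 0) := by
  induction m with
  | zero => intro v; simp [pow_one]
  | succ n ih =>
      intro v
      have h1 : LH k r ^ (n+1+1) = LH k r ^ (n+1) * LH k r := pow_succ _ _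
      have h2 : shiftL (k := k) r ^ (n+1+1) = shiftL r ^ (n+1) * shiftL r := pow_succ _ _
      rw [h1, h2, Module.End.mul_apply, LH_apply, ih ((shiftL r v.1, 0, 0) : Vm k r),
        Module.End.mul_apply]

lemma LH_pow' (m : ℕ) (hm : 1 ≤ m) (v : Vm k r) :
    (LH k r ^ m) v = ((shiftL r ^ m) v.1, 0, 0) := by
  obtain ⟨t, rfl⟩ : ∃ t, m = t + 1 := ⟨m - 1, by omega⟩
  exact LH_pow r t v

variable (k) in
def gen1 : D2BGen → Module.End k (Vm k r)
  | D2BGen.e0 => LE0 k r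
  | D2BGen.e1 => LE1 k r
  | D2BGen.a => LA k r
  | D2BGen.b => LB k r
  | D2BGen.g => LG k r
  | D2BGen.h => LH k r

variable (k) in
lemma hrel1 (hr : 1 ≤ r) : ∀ ⦃x y : FreeAlgebra k D2BGen⦄, D2BRel k r 1 x y →
    (FreeAlgebra.lift k (gen1 k r)) x = (FreeAlgebra.lift k (gen1 k r)) y := by
  intro x y h
  induction h with
  | idem0 => simp only [map_mul, FreeAlgebra.lift_ι_apply, gen1]; refine LinearMap.ext fun v => ?_; simp [Module.End.mul_apply]
  | idem1 => simp only [map_mul, FreeAlgebra.lift_ι_apply, gen1]; refine LinearMap.ext fun v => ?_; simp [Module.End.mul_apply]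
  | orth01 => simp only [map_mul, map_zero, FreeAlgebra.lift_ι_apply, gen1]; refine LinearMap.ext fun v => ?_; simp [Module.End.mul_apply]
  | orth10 => simp only [map_mul, map_zero, FreeAlgebra.lift_ι_apply, gen1]; refine LinearMap.ext fun v => ?_; simp [Module.End.mul_apply]
  | sum1 => simp only [map_add, map_one, FreeAlgebra.lift_ι_apply, gen1]; refine LinearMap.ext fun v => ?_; simp [Module.End.mul_apply, ← Prod.zero_eq_mk]
  | src_a => simp only [map_mul, FreeAlgebra.lift_ι_apply, gen1]; refine LinearMap.ext fun v => ?_; simp [Module.End.mul_apply]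
  | src_b => simp only [map_mul, FreeAlgebra.lift_ι_apply, gen1]; refine LinearMap.ext fun v => ?_; simp [Module.End.mul_apply]
  | src_g => simp only [map_mul, FreeAlgebra.lift_ι_apply, gen1]; refine LinearMap.ext fun v => ?_; simp [Module.End.mul_apply]
  | src_h => simp only [map_mul, FreeAlgebra.lift_ι_apply, gen1]; refine LinearMap.ext fun v => ?_; simp [Module.End.mul_apply]
  | rel_bh =>
      simp only [map_mul, map_zero, FreeAlgebra.lift_ι_apply, gen1]; refine LinearMap.ext fun v => ?_
      simp [Module.End.mul_apply, shiftL_apply]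
  | rel_hg =>
      simp only [map_mul, map_zero, FreeAlgebra.lift_ι_apply, gen1]; refine LinearMap.ext fun v => ?_
      simp [Module.End.mul_apply, map_smul, shiftL_deltaR]
  | rel_gb =>
      simp only [map_mul, map_zero, FreeAlgebra.lift_ι_apply, gen1]; refine LinearMap.ext fun v => ?_; simp [Module.End.mul_apply]
  | rel_comm =>
      simp only [map_mul, FreeAlgebra.lift_ι_apply, gen1]; refine LinearMap.ext fun v => ?_
      simp [Module.End.mul_apply, deltaR, Prod.ext_iff]
      constructor
      · exact Or.inr (if_neg (by omega))
      · exact Or.inr (if_neg (by omega))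
  | rel_a2 =>
      simp only [map_mul, map_natCast, Nat.cast_one, one_mul,
        FreeAlgebra.lift_ι_apply, gen1]
      refine LinearMap.ext fun v => ?_
      simp [Module.End.mul_apply, deltaR, Prod.ext_iff]
      exact Or.inr (if_neg (by omega))
  | rel_eta =>
      simp only [map_mul, map_pow, FreeAlgebra.lift_ι_apply, gen1]
      refine LinearMap.ext fun v => ?_
      simp [Module.End.mul_apply, LH_pow' r r hr, shiftL_pow_r]

variable (k) in
/-- The representation of `D2B` on `Vm` (the projective module at vertex 1). -/
def rho1 (hr : 1 ≤ r) : D2B k r 1 →ₐ[k] Module.End k (Vm k r) :=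
  RingQuot.liftAlgHom k ⟨FreeAlgebra.lift k (gen1 k r), hrel1 k r hr⟩

lemma rho1_mk (hr : 1 ≤ r) (x : FreeAlgebra k D2BGen) :
    rho1 k r hr (RingQuot.mkAlgHom k (D2BRel k r 1) x) = FreeAlgebra.lift k (gen1 k r) x :=
  RingQuot.liftAlgHom_mkAlgHom_apply _ _ _ _


/-! ### The 6-dimensional representation at vertex 0 -/

section Rho0
open Matrix

variable (k) in
def A0 : Matrix (Fin 6) (Fin 6) k :=
  single 1 0 1 + single 3 1 1 + single 3 2 1
variable (k) in
def B0 : Matrix (Fin 6) (Fin 6) k := single 2 4 1 + single 3 5 1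
variable (k) in
def G0 : Matrix (Fin 6) (Fin 6) k := single 4 0 1 + single 5 1 1
variable (k) in
def E00 : Matrix (Fin 6) (Fin 6) k :=
  single 0 0 1 + single 1 1 1 + single 2 2 1 + single 3 3 1
variable (k) in
def E10 : Matrix (Fin 6) (Fin 6) k := single 4 4 1 + single 5 5 1

variable (k) in
def gen0 : D2BGen → Matrix (Fin 6) (Fin 6) k
  | D2BGen.e0 => E00 k
  | D2BGen.e1 => E10 k
  | D2BGen.a => A0 k
  | D2BGen.b => B0 k
  | D2BGen.g => G0 k
  | D2BGen.h => 0

lemma ABG0 : A0 k * B0 k * G0 k = single 3 0 1 := by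
  simp [A0, B0, G0, add_mul, mul_add, Matrix.single_mul_single_same,
    Matrix.single_mul_single_of_ne]

variable (k) in
lemma hrel0 (hr : 1 ≤ r) : ∀ ⦃x y : FreeAlgebra k D2BGen⦄, D2BRel k r 1 x y →
    (FreeAlgebra.lift k (gen0 k)) x = (FreeAlgebra.lift k (gen0 k)) y := by
  intro x y h
  induction h with
  | idem0 =>
      simp only [gen0, _root_.map_mul, FreeAlgebra.lift_ι_apply, gen0]
      simp [E00, add_mul, mul_add, Matrix.single_mul_single_same,
        Matrix.single_mul_single_of_ne]
  | idem1 =>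
      simp only [gen0, _root_.map_mul, FreeAlgebra.lift_ι_apply, gen0]
      simp [E10, add_mul, mul_add, Matrix.single_mul_single_same,
        Matrix.single_mul_single_of_ne]
  | orth01 =>
      simp only [gen0, _root_.map_mul, _root_.map_zero, FreeAlgebra.lift_ι_apply, gen0]
      simp [E00, E10, add_mul, mul_add, Matrix.single_mul_single_same,
        Matrix.single_mul_single_of_ne]
  | orth10 =>
      simp only [gen0, _root_.map_mul, _root_.map_zero, FreeAlgebra.lift_ι_apply, gen0]
      simp [E00, E10, add_mul, mul_add, Matrix.single_mul_single_same,
        Matrix.single_mul_single_of_ne]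
  | sum1 =>
      simp only [gen0, _root_.map_add, _root_.map_one, FreeAlgebra.lift_ι_apply, gen0]
      ext i j
      simp only [E00, E10, Matrix.add_apply, Matrix.one_apply]
      fin_cases i <;> fin_cases j <;> simp [Matrix.single, Matrix.of_apply]
  | src_a =>
      simp only [gen0, _root_.map_mul, FreeAlgebra.lift_ι_apply, gen0]
      simp [E00, A0, add_mul, mul_add, Matrix.single_mul_single_same,
        Matrix.single_mul_single_of_ne]
  | src_b =>
      simp only [gen0, _root_.map_mul, FreeAlgebra.lift_ι_apply, gen0]
      simp [E00, E10, B0, add_mul, mul_add, Matrix.single_mul_single_same,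
        Matrix.single_mul_single_of_ne]
  | src_g =>
      simp only [gen0, _root_.map_mul, FreeAlgebra.lift_ι_apply, gen0]
      simp [E00, E10, G0, add_mul, mul_add, Matrix.single_mul_single_same,
        Matrix.single_mul_single_of_ne]
  | src_h =>
      simp only [gen0, _root_.map_mul, FreeAlgebra.lift_ι_apply, gen0]
      simp
  | rel_bh =>
      simp only [gen0, _root_.map_mul, _root_.map_zero, FreeAlgebra.lift_ι_apply, gen0]
      simp
  | rel_hg =>
      simp only [gen0, _root_.map_mul, _root_.map_zero, FreeAlgebra.lift_ι_apply, gen0]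
      simp
  | rel_gb =>
      simp only [gen0, _root_.map_mul, _root_.map_zero, FreeAlgebra.lift_ι_apply, gen0]
      simp [G0, B0, add_mul, mul_add, Matrix.single_mul_single_same,
        Matrix.single_mul_single_of_ne]
  | rel_comm =>
      simp only [gen0, _root_.map_mul, FreeAlgebra.lift_ι_apply, gen0]
      simp [A0, B0, G0, add_mul, mul_add, Matrix.single_mul_single_same,
        Matrix.single_mul_single_of_ne]
  | rel_a2 =>
      simp only [gen0, _root_.map_mul, map_natCast, Nat.cast_one, one_mul, FreeAlgebra.lift_ι_apply, gen0]
      simp [A0, B0, G0, add_mul, mul_add, Matrix.single_mul_single_same,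
        Matrix.single_mul_single_of_ne]
  | rel_eta =>
      simp only [gen0, _root_.map_mul, map_pow, FreeAlgebra.lift_ι_apply, gen0]
      rw [zero_pow (by omega : r ≠ 0)]
      simp [A0, B0, G0, add_mul, mul_add, Matrix.single_mul_single_same,
        Matrix.single_mul_single_of_ne]

variable (k) in
/-- The representation of `D2B` on the 6-dimensional projective module at vertex 0. -/
def rho0 (hr : 1 ≤ r) : D2B k r 1 →ₐ[k] Matrix (Fin 6) (Fin 6) k :=
  RingQuot.liftAlgHom k ⟨FreeAlgebra.lift k (gen0 k), hrel0 k r hr⟩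

lemma rho0_mk (hr : 1 ≤ r) (x : FreeAlgebra k D2BGen) :
    rho0 k r hr (RingQuot.mkAlgHom k (D2BRel k r 1) x) = FreeAlgebra.lift k (gen0 k) x :=
  RingQuot.liftAlgHom_mkAlgHom_apply _ _ _ _

end Rho0


/-! ### Elements of `D2B` and product relations -/

section Elems
variable (k) (r : ℕ)

def Am : D2B k r 1 := RingQuot.mkAlgHom k (D2BRel k r 1) (ι k D2BGen.a)
def Bm : D2B k r 1 := RingQuot.mkAlgHom k (D2BRel k r 1) (ι k D2BGen.b)
def Gm : D2B k r 1 := RingQuot.mkAlgHom k (D2BRel k r 1) (ι k D2BGen.g)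
def Hm : D2B k r 1 := RingQuot.mkAlgHom k (D2BRel k r 1) (ι k D2BGen.h)

variable {k r}

lemma rel_GB : Gm k r * Bm k r = 0 := by
  have := RingQuot.mkAlgHom_rel k (D2BRel.rel_gb (k := k) (r := r) (c := 1))
  rwa [map_mul, map_zero] at this

lemma rel_BH : Bm k r * Hm k r = 0 := by
  have := RingQuot.mkAlgHom_rel k (D2BRel.rel_bh (k := k) (r := r) (c := 1))
  rwa [map_mul, map_zero] at this

lemma rel_HG : Hm k r * Gm k r = 0 := by
  have := RingQuot.mkAlgHom_rel k (D2BRel.rel_hg (k := k) (r := r) (c := 1))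
  rwa [map_mul, map_zero] at this

lemma rel_AA : Am k r * Am k r = Am k r * Bm k r * Gm k r := by
  have := RingQuot.mkAlgHom_rel k (D2BRel.rel_a2 (k := k) (r := r) (c := 1))
  rwa [map_mul, map_mul, map_mul, map_mul, map_natCast, Nat.cast_one, one_mul] at this

lemma rel_comm' : Am k r * Bm k r * Gm k r = Bm k r * Gm k r * Am k r := by
  have := RingQuot.mkAlgHom_rel k (D2BRel.rel_comm (k := k) (r := r) (c := 1))
  rwa [map_mul, map_mul, map_mul, map_mul] at this

lemma rel_eta' : Gm k r * Am k r * Bm k r = Hm k r ^ r := by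
  have := RingQuot.mkAlgHom_rel k (D2BRel.rel_eta (k := k) (r := r) (c := 1))
  rwa [map_mul, map_mul, map_pow] at this

variable (hr : 1 ≤ r)
include hr

lemma pBHr : Bm k r * Hm k r ^ r = 0 := by
  obtain ⟨s, rfl⟩ : ∃ s, r = s + 1 := ⟨r - 1, by omega⟩
  rw [pow_succ', ← mul_assoc, rel_BH, zero_mul]

lemma pHrG : Hm k r ^ r * Gm k r = 0 := by
  obtain ⟨s, rfl⟩ : ∃ s, r = s + 1 := ⟨r - 1, by omega⟩
  rw [pow_succ, mul_assoc, rel_HG, mul_zero]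

lemma pHr1 : Hm k r ^ (r+1) = 0 := by
  rw [pow_succ, ← rel_eta', mul_assoc, rel_BH, mul_zero]

lemma pHbig (m : ℕ) (hm : r + 1 ≤ m) : Hm k r ^ m = 0 := by
  obtain ⟨t, rfl⟩ : ∃ t, m = (r+1) + t := ⟨m - (r+1), by omega⟩
  rw [pow_add, pHr1 hr, zero_mul]

omit hr

lemma p2 : Gm k r * (Am k r * Bm k r) = Hm k r ^ r := by
  rw [← mul_assoc]; exact rel_eta'

lemma qAAB : Am k r * Am k r * Bm k r = 0 := by
  rw [rel_AA, mul_assoc (Am k r * Bm k r), rel_GB, mul_zero]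

lemma p4 : (Gm k r * Am k r) * (Am k r * Bm k r) = 0 := by
  rw [mul_assoc, ← mul_assoc (Am k r) (Am k r) (Bm k r), qAAB, mul_zero]

include hr
lemma pGP : Gm k r * (Am k r * Bm k r * Gm k r) = 0 := by
  rw [← mul_assoc, p2, pHrG hr]

lemma pGAA : (Gm k r * Am k r) * Am k r = 0 := by
  rw [mul_assoc, rel_AA, pGP hr]

lemma pGA_BG : (Gm k r * Am k r) * (Bm k r * Gm k r) = 0 := by
  rw [mul_assoc, ← mul_assoc (Am k r) (Bm k r) (Gm k r), pGP hr]

omit hr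
lemma pGA_P : (Gm k r * Am k r) * (Am k r * Bm k r * Gm k r) = 0 := by
  rw [← mul_assoc, p4, zero_mul]

lemma pG_BG : Gm k r * (Bm k r * Gm k r) = 0 := by
  rw [← mul_assoc, rel_GB, zero_mul]

lemma pA_BG : Am k r * (Bm k r * Gm k r) = Am k r * Bm k r * Gm k r :=
  (mul_assoc _ _ _).symm

lemma pBG_A : (Bm k r * Gm k r) * Am k r = Am k r * Bm k r * Gm k r := rel_comm'.symm

lemma pA_P : Am k r * (Am k r * Bm k r * Gm k r) = 0 := by
  rw [← mul_assoc, ← mul_assoc, qAAB, zero_mul]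

lemma pBG_BG : (Bm k r * Gm k r) * (Bm k r * Gm k r) = 0 := by
  rw [mul_assoc, ← mul_assoc (Gm k r) (Bm k r) (Gm k r), rel_GB, zero_mul, mul_zero]

include hr
lemma pBG_P : (Bm k r * Gm k r) * (Am k r * Bm k r * Gm k r) = 0 := by
  rw [← mul_assoc, mul_assoc (Bm k r) (Gm k r) (Am k r * Bm k r), p2, pBHr hr, zero_mul]

lemma pP_A : (Am k r * Bm k r * Gm k r) * Am k r = 0 := by
  rw [rel_comm', mul_assoc, rel_AA, pBG_P hr]

omit hr
lemma pP_BG : (Am k r * Bm k r * Gm k r) * (Bm k r * Gm k r) = 0 := by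
  rw [mul_assoc (Am k r * Bm k r) (Gm k r) (Bm k r * Gm k r), pG_BG, mul_zero]

include hr
lemma pP_P : (Am k r * Bm k r * Gm k r) * (Am k r * Bm k r * Gm k r) = 0 := by
  rw [mul_assoc (Am k r * Bm k r) (Gm k r) (Am k r * Bm k r * Gm k r), pGP hr, mul_zero]

omit hr
lemma pA_AB : Am k r * (Am k r * Bm k r) = 0 := by
  rw [← mul_assoc, qAAB]

lemma pBG_B : (Bm k r * Gm k r) * Bm k r = 0 := by
  rw [mul_assoc, rel_GB, mul_zero]

include hr
lemma pBG_AB : (Bm k r * Gm k r) * (Am k r * Bm k r) = 0 := by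
  rw [mul_assoc, p2, pBHr hr]

omit hr
lemma pP_B : (Am k r * Bm k r * Gm k r) * Bm k r = 0 := by
  rw [mul_assoc (Am k r * Bm k r) (Gm k r) (Bm k r), rel_GB, mul_zero]

include hr
lemma pP_AB : (Am k r * Bm k r * Gm k r) * (Am k r * Bm k r) = 0 := by
  rw [mul_assoc (Am k r * Bm k r) (Gm k r) (Am k r * Bm k r), p2,
    mul_assoc (Am k r) (Bm k r) (Hm k r ^ r), pBHr hr, mul_zero]

lemma pAB_GA : (Am k r * Bm k r) * (Gm k r * Am k r) = 0 := by
  rw [← mul_assoc, pP_A hr]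

end Elems

/-! ### Nonvanishing of `η^r` and `αβγ` in `D2B` -/

section NonVanish
variable {r : ℕ}

lemma Hr_ne (hr : 1 ≤ r) : Hm k r ^ r ≠ 0 := by
  intro h
  have h2 := congrArg (rho1 k r hr) h
  rw [map_pow, map_zero, Hm, rho1_mk, FreeAlgebra.lift_ι_apply] at h2
  have h3 := congrArg (fun f => f ((fun _ => 1, 0, 0) : Vm k r)) h2
  simp only [gen1] at h3
  rw [LH_pow' r r hr] at h3
  have h4 := congrArg (fun w => w.1 (⟨r, by omega⟩ : Fin (r+1))) h3
  simp only at h4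
  rw [shiftL_pow] at h4
  rw [dif_pos (by simp)] at h4
  simpa using h4

lemma P_ne (hr : 1 ≤ r) : Am k r * Bm k r * Gm k r ≠ 0 := by
  intro h
  have h2 := congrArg (rho0 k r hr) h
  rw [map_mul, map_mul, map_zero, Am, Bm, Gm, rho0_mk, rho0_mk, rho0_mk,
    FreeAlgebra.lift_ι_apply, FreeAlgebra.lift_ι_apply, FreeAlgebra.lift_ι_apply] at h2
  simp only [gen0] at h2
  rw [ABG0] at h2
  have h3 := congrArg (fun M => M 3 0) h2
  simp [Matrix.single] at h3

end NonVanish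


section Defs
variable {r : ℕ}

lemma Am_def : RingQuot.mkAlgHom k (D2BRel k r 1) (ι k D2BGen.a) = Am k r := rfl
lemma Bm_def : RingQuot.mkAlgHom k (D2BRel k r 1) (ι k D2BGen.b) = Bm k r := rfl
lemma Gm_def : RingQuot.mkAlgHom k (D2BRel k r 1) (ι k D2BGen.g) = Gm k r := rfl
lemma Hm_def : RingQuot.mkAlgHom k (D2BRel k r 1) (ι k D2BGen.h) = Hm k r := rfl

lemma S_pow (hr : 1 ≤ r) (d : ℕ → k) :
    (∑ i ∈ Finset.Icc 1 r, d i • Hm k r ^ i) ^ r = d 1 ^ r • Hm k r ^ r := by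
  have hIcc : Finset.Icc 1 r = insert 1 (Finset.Icc 2 r) := by
    ext m; simp only [Finset.mem_Icc, Finset.mem_insert]; omega
  set T : D2B k r 1 := ∑ i ∈ Finset.Icc 2 r, d i • Hm k r ^ i with hT
  set U : D2B k r 1 := ∑ i ∈ Finset.Icc 2 r, d i • Hm k r ^ (i-2) with hU
  have hS : (∑ i ∈ Finset.Icc 1 r, d i • Hm k r ^ i) = d 1 • Hm k r + T := by
    rw [hIcc, Finset.sum_insert (by simp), pow_one]
  have hcomm : Commute (d 1 • Hm k r) T := by
    apply Commute.sum_right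
    intro i _
    exact (((Commute.refl (Hm k r)).pow_right i).smul_left _).smul_right _
  have hUH : Commute (Hm k r) U := by
    apply Commute.sum_right
    intro i _
    exact ((Commute.refl (Hm k r)).pow_right (i-2)).smul_right _
  have hTU : T = U * (Hm k r ^ 2) := by
    rw [hU, Finset.sum_mul]
    apply Finset.sum_congr rfl
    intro i hi
    rw [Finset.mem_Icc] at hi
    rw [smul_mul_assoc, ← pow_add]
    congr 2
    omega
  rw [hS, hcomm.add_pow, Finset.sum_range_succ]
  have hzero : ∀ j ∈ Finset.range r,
      (d 1 • Hm k r)^j * T^(r-j) * (r.choose j : D2B k r 1) = 0 := by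
    intro j hj
    rw [Finset.mem_range] at hj
    rw [hTU, (hUH.symm.pow_right 2).mul_pow, ← pow_mul, smul_pow, smul_mul_assoc,
      ← mul_assoc, (hUH.pow_pow j (r-j)).eq, mul_assoc, ← pow_add,
      pHbig hr (j + 2*(r-j)) (by omega), mul_zero, smul_zero, zero_mul]
  rw [Finset.sum_eq_zero hzero, zero_add, Nat.sub_self, pow_zero, mul_one,
    Nat.choose_self, Nat.cast_one, mul_one, smul_pow]

end Defs

end Stmt19Aux

/-- For `D(2B)^{r,1}`, any algebra automorphism `φ` fixing the
two vertex idempotents and written as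
`φ(α) = a₁α + a₂βγ + a₃αβγ`, `φ(β) = b₁β + b₂αβ`, `φ(γ) = c₁γ + c₂γα`,
`φ(η) = Σ_{i=1}^r dᵢηⁱ` satisfies `b₁c₂ = b₂c₁`, `d₁^r = a₁b₁c₁`,
`a₁ = b₁c₁`, and `d₁, a₁, b₁, c₁` are all nonzero. -/
theorem stmt19 (k : Type*) [Field k] [IsAlgClosed k] [CharP k 2]
    (r : ℕ) (hr : 1 ≤ r)
    (φ : D2B k r 1 ≃ₐ[k] D2B k r 1)
    (a1 a2 a3 b1 b2 c1 c2 : k) (d : ℕ → k)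
    (he0 : φ (RingQuot.mkAlgHom k (D2BRel k r 1) (ι k D2BGen.e0))
        = RingQuot.mkAlgHom k (D2BRel k r 1) (ι k D2BGen.e0))
    (he1 : φ (RingQuot.mkAlgHom k (D2BRel k r 1) (ι k D2BGen.e1))
        = RingQuot.mkAlgHom k (D2BRel k r 1) (ι k D2BGen.e1))
    (hα : φ (RingQuot.mkAlgHom k (D2BRel k r 1) (ι k D2BGen.a))
        = a1 • RingQuot.mkAlgHom k (D2BRel k r 1) (ι k D2BGen.a)
          + a2 • RingQuot.mkAlgHom k (D2BRel k r 1) (ι k D2BGen.b * ι k D2BGen.g)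
          + a3 • RingQuot.mkAlgHom k (D2BRel k r 1)
              (ι k D2BGen.a * ι k D2BGen.b * ι k D2BGen.g))
    (hβ : φ (RingQuot.mkAlgHom k (D2BRel k r 1) (ι k D2BGen.b))
        = b1 • RingQuot.mkAlgHom k (D2BRel k r 1) (ι k D2BGen.b)
          + b2 • RingQuot.mkAlgHom k (D2BRel k r 1) (ι k D2BGen.a * ι k D2BGen.b))
    (hγ : φ (RingQuot.mkAlgHom k (D2BRel k r 1) (ι k D2BGen.g))
        = c1 • RingQuot.mkAlgHom k (D2BRel k r 1) (ι k D2BGen.g)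
          + c2 • RingQuot.mkAlgHom k (D2BRel k r 1) (ι k D2BGen.g * ι k D2BGen.a))
    (hη : φ (RingQuot.mkAlgHom k (D2BRel k r 1) (ι k D2BGen.h))
        = ∑ i ∈ Finset.Icc 1 r,
            d i • RingQuot.mkAlgHom k (D2BRel k r 1) ((ι k D2BGen.h) ^ i)) :
    b1 * c2 = b2 * c1 ∧ d 1 ^ r = a1 * b1 * c1 ∧ a1 = b1 * c1 ∧
      d 1 ≠ 0 ∧ a1 ≠ 0 ∧ b1 ≠ 0 ∧ c1 ≠ 0 := by
  have h2two : (2:k) = 0 := by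
    have := CharP.cast_eq_zero k 2
    exact_mod_cast this
  simp only [map_mul, map_pow, Am_def, Bm_def, Gm_def,
    Hm_def] at hα hβ hγ hη
  -- Equation 1 : from γβ = 0
  have e1 : φ (Gm k r) * φ (Bm k r) = 0 := by
    rw [← map_mul, rel_GB, map_zero]
  rw [hγ, hβ] at e1
  simp only [mul_add, add_mul, smul_mul_assoc, mul_smul_comm, smul_smul,
    rel_GB, p2, rel_eta', p4,
    smul_zero, add_zero, zero_add, mul_zero, zero_mul] at e1
  rw [← add_smul] at e1
  have h1 : b1 * c2 + b2 * c1 = 0 := by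
    rcases smul_eq_zero.mp e1 with h | h
    · exact h
    · exact absurd h (Hr_ne hr)
  -- Equation 2 : from γαβ = η^r
  have e2 : φ (Gm k r) * φ (Am k r) * φ (Bm k r) = φ (Hm k r) ^ r := by
    rw [← map_mul, ← map_mul, ← map_pow, rel_eta']
  rw [hγ, hα, hβ, hη, S_pow hr d] at e2
  simp only [mul_add, add_mul, smul_mul_assoc, mul_smul_comm, smul_smul,
    rel_GB, p2, rel_eta', p4, pG_BG, pGP hr, pGAA hr, pGA_BG hr, pGA_P,
    smul_zero, add_zero, zero_add, mul_zero, zero_mul] at e2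
  have h2 : b1 * (a1 * c1) = d 1 ^ r := smul_left_injective k (Hr_ne hr) e2
  -- Equation 3 : from α² = αβγ
  have e3 : φ (Am k r) * φ (Am k r) = φ (Am k r) * φ (Bm k r) * φ (Gm k r) := by
    rw [← map_mul, ← map_mul, ← map_mul, rel_AA]
  rw [hα, hβ, hγ] at e3
  simp only [mul_add, add_mul, smul_mul_assoc, mul_smul_comm, smul_smul,
    rel_AA, pA_BG, pBG_A, pA_P, pBG_BG, pBG_P hr, pP_A hr, pP_BG, pP_P hr,
    pA_AB, pBG_B, pBG_AB hr, pP_B, pP_AB hr, pAB_GA hr,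
    smul_zero, add_zero, zero_add, mul_zero, zero_mul] at e3
  simp only [smul_smul, ← add_smul] at e3
  have h3 := smul_left_injective k (P_ne hr) e3
  -- d 1 ≠ 0 via injectivity of φ
  have e4 : φ (Hm k r ^ r) = d 1 ^ r • Hm k r ^ r := by
    rw [map_pow, hη, S_pow hr d]
  have hd1 : d 1 ≠ 0 := by
    intro h0
    rw [h0, zero_pow (by omega : r ≠ 0), zero_smul] at e4
    exact Hr_ne hr (φ.injective (e4.trans (map_zero φ).symm))
  have hprod : b1 * (a1 * c1) ≠ 0 := by
    rw [h2]
    exact pow_ne_zero r hd1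
  have ha1 : a1 ≠ 0 := fun h => hprod (by rw [h]; ring)
  have hb1 : b1 ≠ 0 := fun h => hprod (by rw [h]; ring)
  have hc1 : c1 ≠ 0 := fun h => hprod (by rw [h]; ring)
  refine ⟨?_, ?_, ?_, hd1, ha1, hb1, hc1⟩
  · linear_combination h1 - b2 * c1 * h2two
  · linear_combination -h2
  · have h5 : a1 * a1 = a1 * (b1 * c1) := by
      linear_combination h3 - a1 * a2 * h2two
    exact mul_left_cancel₀ ha1 h5
end
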